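/- arXiv:math/0401012 — 3 statements merged into one kernel-verified Lean document; each statement's English description precedes it below -/
import Mathlib

section
/- As an identity of formal power series in q with coefficients in the Laurent polynomial ring ℤ[y, y⁻¹]: the sum over all partitions π of y^{srank(π)} q^{|π|} equals 1/(q⁴;q⁴)_∞ times the sum over all partitions π₂ having no repeated even parts of y^{srank(π₂)} q^{|π₂|}. Equivalently, for each n ≥ 0 and each integer s, the number of partitions of n with srank equal to s equals the sum over m ≥ 0 of p(m) times the number of partitions of n − 4m with no repeated even part and srank equal to s. -/
/-!
Split the multiplicity `f` of each even part `2j` of a partition `π` as `f = (f mod 2) + 2⌊f/2⌋`: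
this writes `π` uniquely as `ν ∪ {2j, 2j : j ∈ μ}` with `ν` having no repeated even part and
`|π| = |ν| + 4|μ|`. A pair of equal even parts contributes no odd part and changes every column
length of the diagram by `0` or `2`, so `srank π = srank ν`; summing over `|μ| = m` gives the
factor `p(m)`.
-/

open scoped Classical

namespace AndrewsStanley

/-- `O(π)`: the number of odd parts of the partition `π`. -/
def numOdd {n : ℕ} (π : n.Partition) : ℕ := (π.parts.filter (fun j => Odd j)).card

/-- The length of the `i`-th column (`i ≥ 1`) of the Young diagram of `π`,
i.e. the `i`-th part of the conjugate partition `π'`. -/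
def colLen {n : ℕ} (π : n.Partition) (i : ℕ) : ℕ := (π.parts.filter (fun j => i ≤ j)).card

/-- `O(π')`: the number of odd parts of the conjugate partition `π'`.
(All parts of `π` are at most `n`, so all columns of the diagram have index in `[1, n]`.) -/
def numOddConj {n : ℕ} (π : n.Partition) : ℕ :=
  ((Finset.Icc 1 n).filter (fun i => Odd (colLen π i))).card

/-- Stanley's statistic `srank(π) = O(π) - O(π')`. -/
def srank {n : ℕ} (π : n.Partition) : ℤ := (numOdd π : ℤ) - (numOddConj π : ℤ)

/-- A partition has no repeated even parts. -/
def NoRepEven {n : ℕ} (π : n.Partition) : Prop := ∀ j : ℕ, Even j → π.parts.count j ≤ 1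

/-- `p_i(N)`: the number of partitions of `N` with `srank ≡ i (mod 4)`. -/
noncomputable def pMod (i : ℤ) (N : ℕ) : ℕ :=
  (Finset.univ.filter (fun π : N.Partition => srank π % 4 = i)).card

/-- The Andrews–Garvan crank, defined on a multiset of parts: the largest part if there
are no ones, and otherwise the number of parts larger than the number of ones minus
the number of ones. -/
def mcrank (s : Multiset ℕ) : ℤ :=
  if s.count 1 = 0 then (s.sup : ℤ)
  else ((s.filter (fun j => s.count 1 < j)).card : ℤ) - (s.count 1 : ℤ)

/-- The parts of the partition `π₁` in which `j` occurs `⌊f_{2j}(π)/2⌋` times. -/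
def halfEvenParts {n : ℕ} (π : n.Partition) : Multiset ℕ :=
  (Finset.Icc 1 n).val.bind (fun j => Multiset.replicate (π.parts.count (2 * j) / 2) j)

/-- The second largest part `λ₂` of a partition (counted with multiplicity; `0` if
there are fewer than two parts). -/
def secondPart {n : ℕ} (π : n.Partition) : ℕ := (π.parts.erase π.parts.sup).sup

/-- Partitions of type B: either `π = (3,1)`, or `|π| ≠ 4`, `λ₁ - λ₂ ≥ 2`,
`λ'₁ - λ'₂ ≥ 2`, `λ₁ - 2` and `λ₂` are not identical even integers, and `π` has no
repeated even parts. -/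
def TypeB {n : ℕ} (π : n.Partition) : Prop :=
  π.parts = {3, 1} ∨
    (n ≠ 4 ∧ secondPart π + 2 ≤ π.parts.sup ∧ colLen π 2 + 2 ≤ colLen π 1 ∧
      ¬(π.parts.sup = secondPart π + 2 ∧ Even (secondPart π)) ∧ NoRepEven π)

/-- `stcrank(π) = crank(π₁) + srank(π)/2 + Ψ(π)` where `Ψ(π) = 1` iff `π` is of type B. -/
noncomputable def stcrank {n : ℕ} (π : n.Partition) : ℤ :=
  mcrank (halfEvenParts π) + srank π / 2 + (if TypeB π then 1 else 0)

/-- `P_i(k, m, N)`: the number of partitions of `N` with `srank ≡ i (mod 4)` and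
`stcrank ≡ k (mod m)`. -/
noncomputable def Pcount (i k : ℤ) (m : ℕ) (N : ℕ) : ℕ :=
  (Finset.univ.filter
    (fun π : N.Partition => srank π % 4 = i ∧ stcrank π % (m : ℤ) = k)).card

/-- The parts of `π` listed in (weakly) decreasing order. -/
def partsList {n : ℕ} (π : n.Partition) : List ℕ := (π.parts.sort (· ≤ ·)).reverse

/-- `λ_a`, the length of the `a`-th row (`a ≥ 1`) of the Young diagram of `π`. -/
def rowLen {n : ℕ} (π : n.Partition) (a : ℕ) : ℕ := (partsList π).getD (a - 1) 0

/-- The hook length of the cell in row `a` and column `b` (both `1`-indexed). -/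
def hookLen {n : ℕ} (π : n.Partition) (a b : ℕ) : ℕ :=
  (rowLen π a - b) + (colLen π b - a) + 1

/-- A partition is a `t`-core if no hook length of its Young diagram equals `t`. -/
def IsCore (t : ℕ) {n : ℕ} (π : n.Partition) : Prop :=
  ∀ a b : ℕ, 1 ≤ a → 1 ≤ b → b ≤ rowLen π a → hookLen π a b ≠ t

/-- `a_t(N)`: the number of partitions of `N` that are `t`-cores. -/
noncomputable def coreCount (t N : ℕ) : ℕ :=
  (Finset.univ.filter (fun π : N.Partition => IsCore t π)).card

/-- `r_j(π)`: the number of cells in row `a`, column `b` (1-indexed) of the Young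
diagram of `π` with `b - a ≡ j (mod 5)`. -/
noncomputable def rres {n : ℕ} (π : n.Partition) (j : ℕ) : ℕ :=
  ∑ a ∈ Finset.Icc 1 (Multiset.card π.parts),
    ((Finset.Icc 1 (rowLen π a)).filter (fun b => ((b : ℤ) - (a : ℤ)) % 5 = (j : ℤ))).card

/-- The Garvan–Kim–Stanton 5-core crank (as a representative modulo 5):
`d₅(π) = 2 + 2r₀(π) + r₁(π) - r₃(π) - 2r₄(π)`. -/
noncomputable def d5 {n : ℕ} (π : n.Partition) : ℤ :=
  2 + 2 * (rres π 0 : ℤ) + (rres π 1 : ℤ) - (rres π 3 : ℤ) - 2 * (rres π 4 : ℤ)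

/-- `a_{5,i}(N)`: the number of 5-core partitions of `N` with `srank ≡ i (mod 4)`. -/
noncomputable def a5srank (i : ℤ) (N : ℕ) : ℕ :=
  (Finset.univ.filter (fun π : N.Partition => IsCore 5 π ∧ srank π % 4 = i)).card

/-- The infinite product `∏_{j≥0} f j` of power series, in the situation (as for all
the products occurring here) where the factor `f j` is of the form `1 + (terms of
degree > j)`, so that the coefficient of `q^N` in the partial products stabilizes:
it is the corresponding coefficient in `∏_{j ≤ N} f j`. -/
noncomputable def infProd {R : Type*} [CommRing R] (f : ℕ → PowerSeries R) :
    PowerSeries R :=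
  PowerSeries.mk fun N => PowerSeries.coeff N (∏ j ∈ Finset.range (N + 1), f j)

def evenPairs (μ : Multiset ℕ) : Multiset ℕ := 2 • μ.map (2 * ·)

def NoRepEvenParts (s : Multiset ℕ) : Prop := ∀ j : ℕ, Even j → s.count j ≤ 1

section EvenPairs

variable (μ : Multiset ℕ)

@[simp] lemma evenPairs_cons (a : ℕ) :
    evenPairs (a ::ₘ μ) = 2 * a ::ₘ 2 * a ::ₘ evenPairs μ := by
  simp [evenPairs, two_nsmul, Multiset.cons_add, Multiset.add_cons]

lemma sum_evenPairs : (evenPairs μ).sum = 4 * μ.sum := by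
  rw [evenPairs, Multiset.sum_nsmul, Multiset.sum_map_mul_left, Multiset.map_id', smul_eq_mul]
  ring

lemma mem_evenPairs {a : ℕ} : a ∈ evenPairs μ ↔ ∃ j ∈ μ, 2 * j = a := by
  simp [evenPairs, Multiset.mem_nsmul]

lemma count_evenPairs_two_mul (j : ℕ) : (evenPairs μ).count (2 * j) = 2 * μ.count j := by
  rw [evenPairs, Multiset.count_nsmul,
    Multiset.count_map_eq_count' _ _ (mul_right_injective₀ two_ne_zero)]

lemma count_evenPairs_of_odd {v : ℕ} (hv : Odd v) : (evenPairs μ).count v = 0 := by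
  rw [Multiset.count_eq_zero, mem_evenPairs]
  rintro ⟨j, -, rfl⟩
  exact Nat.not_odd_iff_even.mpr (even_two_mul j) hv

lemma filter_odd_evenPairs : (evenPairs μ).filter Odd = 0 :=
  Multiset.filter_eq_nil.mpr fun _ ha hodd =>
    Multiset.count_ne_zero.mpr ha (count_evenPairs_of_odd μ hodd)

lemma even_card_filter_evenPairs (p : ℕ → Prop) [DecidablePred p] :
    Even ((evenPairs μ).filter p).card := by
  rw [evenPairs, Multiset.filter_nsmul, Multiset.card_nsmul]
  exact even_two_mul _

end EvenPairs

lemma exists_eq_add_evenPairs (p : Multiset ℕ) :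
    ∃ ν μ, NoRepEvenParts ν ∧ p = ν + evenPairs μ := by
  induction p using Multiset.induction with
  | empty => exact ⟨0, 0, fun _ _ => by simp, by simp [evenPairs]⟩
  | cons a p ih =>
    obtain ⟨ν, μ, hν, rfl⟩ := ih
    by_cases hpair : Even a ∧ a ∈ ν
    · obtain ⟨⟨j, rfl⟩, ha⟩ := hpair
      rw [← two_mul] at ha ⊢
      refine ⟨ν.erase (2 * j), j ::ₘ μ, fun v hv => (Multiset.count_le_of_le v
        (Multiset.erase_le _ _)).trans (hν v hv), ?_⟩
      nth_rw 1 [← Multiset.cons_erase ha]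
      simp only [evenPairs_cons, Multiset.cons_add, Multiset.add_cons]
    · refine ⟨a ::ₘ ν, μ, fun v hv => ?_, by rw [Multiset.cons_add]⟩
      rw [Multiset.count_cons]
      split_ifs with hva
      · subst hva
        simp [Multiset.count_eq_zero.mpr (fun ha => hpair ⟨hv, ha⟩)]
      · exact hν v hv

lemma eq_of_add_evenPairs_eq {ν₁ ν₂ μ₁ μ₂ : Multiset ℕ} (h₁ : NoRepEvenParts ν₁)
    (h₂ : NoRepEvenParts ν₂) (h : ν₁ + evenPairs μ₁ = ν₂ + evenPairs μ₂) :
    ν₁ = ν₂ ∧ μ₁ = μ₂ := by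
  have heven : ∀ j, ν₁.count (2 * j) = ν₂.count (2 * j) ∧ μ₁.count j = μ₂.count j := by
    intro j
    have hj := congrArg (Multiset.count (2 * j)) h
    simp only [Multiset.count_add, count_evenPairs_two_mul] at hj
    have := h₁ (2 * j) (even_two_mul j)
    have := h₂ (2 * j) (even_two_mul j)
    omega
  refine ⟨Multiset.ext.mpr fun v => ?_, Multiset.ext.mpr fun j => (heven j).2⟩
  rcases Nat.even_or_odd v with ⟨j, rfl⟩ | hv
  · simpa [two_mul] using (heven j).1
  · simpa [count_evenPairs_of_odd _ hv] using congrArg (Multiset.count v) h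

lemma colLen_eq_zero_of_lt {k i : ℕ} (ν : k.Partition) (hki : k < i) : colLen ν i = 0 :=
  Multiset.card_eq_zero.mpr <| Multiset.filter_eq_nil.mpr fun _ ha hia =>
    (Nat.Partition.le_of_mem_parts ha).not_gt (hki.trans_le hia)

lemma numOddConj_eq_card_filter_Icc {k n : ℕ} (ν : k.Partition) (hkn : k ≤ n) :
    numOddConj ν = ((Finset.Icc 1 n).filter fun i => Odd (colLen ν i)).card := by
  rw [numOddConj]
  congr 1
  ext i
  simp only [Finset.mem_filter, Finset.mem_Icc]
  constructor
  · rintro ⟨⟨h1, hik⟩, hodd⟩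
    exact ⟨⟨h1, hik.trans hkn⟩, hodd⟩
  · rintro ⟨⟨h1, -⟩, hodd⟩
    refine ⟨⟨h1, not_lt.mp fun hki => ?_⟩, hodd⟩
    rw [colLen_eq_zero_of_lt ν hki] at hodd
    exact Nat.not_odd_zero hodd

lemma srank_eq_of_parts_eq_add_evenPairs {n k : ℕ} (π : n.Partition) (ν : k.Partition)
    (μ : Multiset ℕ) (h : π.parts = ν.parts + evenPairs μ) : srank π = srank ν := by
  have hkn : k ≤ n := by
    have hsum := congrArg Multiset.sum h
    rw [π.parts_sum, Multiset.sum_add, ν.parts_sum, sum_evenPairs] at hsum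
    omega
  have hodd : numOdd π = numOdd ν := by
    rw [numOdd, numOdd, h, Multiset.filter_add, filter_odd_evenPairs, add_zero]
  have hcol (i : ℕ) : Odd (colLen π i) ↔ Odd (colLen ν i) := by
    rw [colLen, colLen, h, Multiset.filter_add, Multiset.card_add, Nat.odd_add]
    simp [even_card_filter_evenPairs]
  have hconj : numOddConj π = numOddConj ν := by
    rw [numOddConj, Finset.filter_congr fun i _ => hcol i, numOddConj_eq_card_filter_Icc ν hkn]
  rw [srank, srank, hodd, hconj]

def withEvenPairs {n m : ℕ} (h : 4 * m ≤ n) (μ : m.Partition) (ν : (n - 4 * m).Partition) :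
    n.Partition where
  parts := ν.parts + evenPairs μ.parts
  parts_pos {i} hi := by
    rcases Multiset.mem_add.mp hi with hν | hμ
    · exact ν.parts_pos hν
    · obtain ⟨j, hj, rfl⟩ := (mem_evenPairs _).mp hμ
      exact Nat.mul_pos two_pos (μ.parts_pos hj)
  parts_sum := by
    rw [Multiset.sum_add, sum_evenPairs, ν.parts_sum, μ.parts_sum]
    omega

lemma srank_withEvenPairs {n m : ℕ} (h : 4 * m ≤ n) (μ : m.Partition)
    (ν : (n - 4 * m).Partition) : srank (withEvenPairs h μ ν) = srank ν :=
  srank_eq_of_parts_eq_add_evenPairs _ ν μ.parts rfl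

lemma exists_withEvenPairs_eq {n : ℕ} (π : n.Partition) :
    ∃ m, ∃ h : 4 * m ≤ n, ∃ μ ν, NoRepEven ν ∧ withEvenPairs h μ ν = π := by
  obtain ⟨ν, μ, hν, hπ⟩ := exists_eq_add_evenPairs π.parts
  have hsum : ν.sum + 4 * μ.sum = n := by
    rw [← π.parts_sum, hπ, Multiset.sum_add, sum_evenPairs]
  have hpos {i} (hi : i ∈ π.parts) : 0 < i := π.parts_pos hi
  refine ⟨μ.sum, by omega, ⟨μ, fun {j} hj => ?_, rfl⟩,
    ⟨ν, fun hi => hpos (hπ ▸ Multiset.mem_add.mpr (Or.inl hi)), by omega⟩, hν,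
    Nat.Partition.ext hπ.symm⟩
  have := hpos (hπ ▸ Multiset.mem_add.mpr (Or.inr ((mem_evenPairs μ).mpr ⟨j, hj, rfl⟩)))
  omega

lemma withEvenPairs_inj {n m₁ m₂ : ℕ} {h₁ : 4 * m₁ ≤ n} {h₂ : 4 * m₂ ≤ n}
    {μ₁ : m₁.Partition} {μ₂ : m₂.Partition} {ν₁ : (n - 4 * m₁).Partition}
    {ν₂ : (n - 4 * m₂).Partition} (hν₁ : NoRepEven ν₁) (hν₂ : NoRepEven ν₂)
    (h : withEvenPairs h₁ μ₁ ν₁ = withEvenPairs h₂ μ₂ ν₂) :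
    m₁ = m₂ ∧ μ₁.parts = μ₂.parts ∧ ν₁.parts = ν₂.parts := by
  obtain ⟨hν, hμ⟩ := eq_of_add_evenPairs_eq hν₁ hν₂ (congrArg Nat.Partition.parts h)
  exact ⟨by rw [← μ₁.parts_sum, ← μ₂.parts_sum, hμ], hμ, hν⟩

noncomputable def srankDecompositions (n : ℕ) (s : ℤ) :
    Finset (Σ m : ℕ, m.Partition × (n - 4 * m).Partition) :=
  (Finset.range (n / 4 + 1)).sigma fun m => Finset.univ ×ˢ
    Finset.univ.filter fun ν : (n - 4 * m).Partition => NoRepEven ν ∧ srank ν = s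

lemma mem_srankDecompositions {n : ℕ} {s : ℤ}
    {a : Σ m : ℕ, m.Partition × (n - 4 * m).Partition} :
    a ∈ srankDecompositions n s ↔ 4 * a.1 ≤ n ∧ NoRepEven a.2.2 ∧ srank a.2.2 = s := by
  simp only [srankDecompositions, Finset.mem_sigma, Finset.mem_range, Finset.mem_product,
    Finset.mem_filter, Finset.mem_univ, true_and]
  exact and_congr_left' (by omega)

lemma card_srankDecompositions (n : ℕ) (s : ℤ) :
    (srankDecompositions n s).card = ∑ m ∈ Finset.range (n / 4 + 1),
      Fintype.card m.Partition *
        (Finset.univ.filter fun ν : (n - 4 * m).Partition => NoRepEven ν ∧ srank ν = s).card := by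
  simp only [srankDecompositions, Finset.card_sigma, Finset.card_product, Finset.card_univ]

lemma card_filter_srank_eq_card_srankDecompositions (n : ℕ) (s : ℤ) :
    (Finset.univ.filter fun π : n.Partition => srank π = s).card =
      (srankDecompositions n s).card := by
  refine (Finset.card_bij
    (fun a ha => withEvenPairs (mem_srankDecompositions.mp ha).1 a.2.1 a.2.2) ?_ ?_ ?_).symm
  · rintro ⟨m, μ, ν⟩ ha
    exact Finset.mem_filter.mpr ⟨Finset.mem_univ _,
      (srank_withEvenPairs _ μ ν).trans (mem_srankDecompositions.mp ha).2.2⟩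
  · rintro ⟨m₁, μ₁, ν₁⟩ ha ⟨m₂, μ₂, ν₂⟩ hb h
    obtain ⟨rfl, hμ, hν⟩ := withEvenPairs_inj (mem_srankDecompositions.mp ha).2.1
      (mem_srankDecompositions.mp hb).2.1 h
    obtain rfl : μ₁ = μ₂ := Nat.Partition.ext hμ
    obtain rfl : ν₁ = ν₂ := Nat.Partition.ext hν
    rfl
  · intro π hπ
    obtain ⟨m, hm, μ, ν, hν, rfl⟩ := exists_withEvenPairs_eq π
    refine ⟨⟨m, μ, ν⟩, mem_srankDecompositions.mpr ⟨hm, hν, ?_⟩, rfl⟩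
    exact (srank_withEvenPairs hm μ ν).symm.trans (Finset.mem_filter.mp hπ).2

/-- For each `n ≥ 0` and each integer `s`, the number of partitions of `n`
with `srank = s` equals `∑_{m ≥ 0} p(m) ·` (number of partitions of `n - 4m` with no
repeated even part and `srank = s`).  (Terms with `4m > n` vanish, so the sum is taken
over `m ≤ n/4`.) -/
theorem srank_count_factorization (n : ℕ) (s : ℤ) :
    (Finset.univ.filter (fun π : n.Partition => srank π = s)).card =
      ∑ m ∈ Finset.range (n / 4 + 1),
        Fintype.card (Nat.Partition m) *
          (Finset.univ.filter
            (fun π : Nat.Partition (n - 4 * m) => NoRepEven π ∧ srank π = s)).card := by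
  rw [card_filter_srank_eq_card_srankDecompositions, card_srankDecompositions]

end AndrewsStanley
end

section
/- Let n₀, n₁, n₂, n₃, n₄ be integers with n₀ + n₁ + n₂ + n₃ + n₄ = 0, and define n'₀ = n₁ + 2n₂ + 2n₄ + 1, n'₁ = −n₁ − n₂ + n₃ + n₄ + 1, n'₂ = 2n₁ + n₂ + 2n₃, n'₃ = −2n₂ − 2n₃ − n₄ − 1, n'₄ = −2n₁ − n₃ − 2n₄ − 1. Then Σ_{i=0}^{4} ( (n_i + i)³ − (n'_i + i)³ ) ≡ 0 (mod 4). -/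
/-! Substituting `n₀ = -(n₁ + n₂ + n₃ + n₄)`, the cubic terms of the sum cancel and every
remaining coefficient is `≡ 0` or `2 (mod 4)`. Modulo `4` the sum is therefore twice a sum of
terms of the form `x y (x + y)` and `x (x + 1)`, each of which is even. -/

open scoped Classical

namespace AndrewsStanley

theorem Int.even_mul_mul_add (x y : ℤ) : Even (x * y * (x + y)) := by
  rcases Int.even_or_odd x with hx | hx
  · exact (hx.mul_right y).mul_right _
  rcases Int.even_or_odd y with hy | hy
  · exact (hy.mul_left x).mul_right _
  · exact (hx.add_odd hy).mul_left _

theorem cube_sum_modEq_two_mul (n1 n2 n3 n4 : ℤ) :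
    ((-(n1 + n2 + n3 + n4) + 0) ^ 3 - ((n1 + 2 * n2 + 2 * n4 + 1) + 0) ^ 3) +
        ((n1 + 1) ^ 3 - ((-n1 - n2 + n3 + n4 + 1) + 1) ^ 3) +
        ((n2 + 2) ^ 3 - ((2 * n1 + n2 + 2 * n3) + 2) ^ 3) +
        ((n3 + 3) ^ 3 - ((-2 * n2 - 2 * n3 - n4 - 1) + 3) ^ 3) +
        ((n4 + 4) ^ 3 - ((-2 * n1 - n3 - 2 * n4 - 1) + 4) ^ 3) ≡
      2 * (n1 * n2 * (n1 + n2) + n1 * n3 * (n1 + n3) + n2 * n4 * (n2 + n4) +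
        n1 * (n1 + 1) + n2 * (n2 + 1) + n3 * (n3 + 1)) [ZMOD 4] := by
  apply (ZMod.intCast_eq_intCast_iff _ _ 4).mp
  push_cast
  linear_combination (norm := ring_nf)
  reduce_mod_char

/-- if `n₀ + n₁ + n₂ + n₃ + n₄ = 0` and `n'ᵢ` are given by the
indicated linear forms, then `Σ_{i=0}^{4} ((nᵢ + i)³ - (n'ᵢ + i)³) ≡ 0 (mod 4)`. -/
theorem cube_sum_congruence (n0 n1 n2 n3 n4 : ℤ)
    (h : n0 + n1 + n2 + n3 + n4 = 0) :
    (4 : ℤ) ∣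
      ((n0 + 0) ^ 3 - ((n1 + 2 * n2 + 2 * n4 + 1) + 0) ^ 3) +
        ((n1 + 1) ^ 3 - ((-n1 - n2 + n3 + n4 + 1) + 1) ^ 3) +
        ((n2 + 2) ^ 3 - ((2 * n1 + n2 + 2 * n3) + 2) ^ 3) +
        ((n3 + 3) ^ 3 - ((-2 * n2 - 2 * n3 - n4 - 1) + 3) ^ 3) +
        ((n4 + 4) ^ 3 - ((-2 * n1 - n3 - 2 * n4 - 1) + 4) ^ 3) := by
  obtain rfl : n0 = -(n1 + n2 + n3 + n4) := by linarith
  obtain ⟨k, hk⟩ : Even (n1 * n2 * (n1 + n2) + n1 * n3 * (n1 + n3) + n2 * n4 * (n2 + n4) +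
      n1 * (n1 + 1) + n2 * (n2 + 1) + n3 * (n3 + 1)) :=
    (((((Int.even_mul_mul_add n1 n2).add (Int.even_mul_mul_add n1 n3)).add
      (Int.even_mul_mul_add n2 n4)).add (Int.even_mul_succ_self n1)).add
      (Int.even_mul_succ_self n2)).add (Int.even_mul_succ_self n3)
  have hmod := cube_sum_modEq_two_mul n1 n2 n3 n4
  rw [hk] at hmod
  exact (dvd_sub_right (show (4 : ℤ) ∣ 2 * (k + k) from ⟨k, by ring⟩)).mp hmod.dvd

end AndrewsStanley
end

section
/- For every n ≥ 0, a_{5,0}(4n) = a₅(4n) and a_{5,0}(4n+1) = a₅(4n+1); that is, every 5-core partition of an integer congruent to 0 or 1 modulo 4 has srank ≡ 0 (mod 4). -/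
open scoped Classical

namespace AndrewsStanley

/-!
With `β_a = λ_a - a`, write `C(π)` for the number of cells of odd content. Since
`O(π) = n - 2 ∑ ⌊λ_a / 2⌋` and `O(π') = n - 2 · #{cells in even rows}`, one gets
`srank π ≡ 2 C(π) (mod 4)`; and for even `K ≥ n`, `4 C(π)` is `2n - K` plus twice the number of
odd numbers among `β_1, …, β_K`. For a `5`-core the β-numbers fill each runner of the
`5`-abacus from the bottom without gaps, so everything is governed by the runner charges
`c_0, …, c_4`:
`∑ c_r = 0`, `2n = 5 ∑ c_r² + 2 ∑ r c_r` and `4 C(π) = 2n + 2 - #{r : r + c_r odd}`.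
Squares are `2c` or `1` modulo `8`, and this makes `C(π)` even when `n ≡ 0, 1 (mod 4)`.
-/

open Finset

lemma _root_.List.Pairwise.antitone_getD {l : List ℕ} (hl : l.Pairwise (· ≥ ·)) :
    Antitone (l.getD · 0) := by
  intro i j hij
  dsimp only
  rcases lt_or_ge j l.length with hj | hj
  · have hi := hij.trans_lt hj
    simp only [List.getD_eq_getElem _ _ hi, List.getD_eq_getElem _ _ hj]
    rcases hij.lt_or_eq with h | rfl
    · exact List.pairwise_iff_getElem.mp hl i j hi hj h
    · exact le_rfl
  · rw [List.getD_eq_default _ _ hj]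
    exact Nat.zero_le _

lemma _root_.Multiset.sum_map_boole {α : Type*} (p : α → Prop) [DecidablePred p]
    (s : Multiset α) : (s.map fun x => if p x then 1 else 0).sum = Multiset.card (s.filter p) := by
  induction s using Multiset.induction_on with
  | empty => simp
  | cons a s ih => by_cases h : p a <;> simp [h, ih, add_comm]

lemma _root_.List.sum_range_getD {M : Type*} [AddCommMonoid M] (f : ℕ → M) (hf : f 0 = 0) :
    ∀ (l : List ℕ) (K : ℕ), l.length ≤ K → ∑ i ∈ range K, f (l.getD i 0) = (l.map f).sum
  | [], K, _ => by simp [hf]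
  | x :: l, K + 1, hK => by
    simp only [sum_range_succ', List.getD_cons_succ, List.getD_cons_zero,
      List.sum_range_getD f hf l K (by simpa using hK)]
    simp [add_comm]

section Rows

variable {n : ℕ} (π : n.Partition)

lemma coe_partsList : (partsList π : Multiset ℕ) = π.parts := by
  rw [partsList, Multiset.coe_reverse, Multiset.sort_eq]

lemma rowLen_antitone : Antitone (rowLen π) := by
  have hsorted : (partsList π).Pairwise (· ≥ ·) := by
    rw [partsList, List.pairwise_reverse]
    exact Multiset.pairwise_sort _ _
  exact hsorted.antitone_getD.comp_monotone fun _ _ h => Nat.sub_le_sub_right h 1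

lemma rowLen_eq_zero {a : ℕ} (ha : Multiset.card π.parts < a) : rowLen π a = 0 :=
  List.getD_eq_default _ _ (by rw [← Multiset.coe_card, coe_partsList]; omega)

lemma rowLen_le (a : ℕ) : rowLen π a ≤ n := by
  rcases lt_or_ge (a - 1) (partsList π).length with h | h
  · rw [rowLen, List.getD_eq_getElem _ _ h]
    exact Nat.Partition.le_of_mem_parts (by rw [← coe_partsList]; exact List.getElem_mem h)
  · rw [rowLen, List.getD_eq_default _ _ h]
    exact Nat.zero_le n

lemma card_parts_le : Multiset.card π.parts ≤ n := by
  simpa [π.parts_sum] using Multiset.card_nsmul_le_sum fun _ hx => π.parts_pos hx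

lemma sum_Icc_rowLen_apply {M : Type*} [AddCommMonoid M] (f : ℕ → M) (hf : f 0 = 0) {K : ℕ}
    (hK : Multiset.card π.parts ≤ K) :
    ∑ a ∈ Icc 1 K, f (rowLen π a) = (π.parts.map f).sum := by
  rw [← Ico_add_one_right_eq_Icc, sum_Ico_eq_sum_range, add_tsub_cancel_right]
  simp only [rowLen, add_tsub_cancel_left]
  rw [List.sum_range_getD f hf _ K (by rw [← Multiset.coe_card, coe_partsList]; exact hK),
    ← coe_partsList, Multiset.map_coe, Multiset.sum_coe]

lemma sum_Icc_rowLen {K : ℕ} (hK : Multiset.card π.parts ≤ K) :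
    ∑ a ∈ Icc 1 K, rowLen π a = n := by
  simpa [π.parts_sum] using sum_Icc_rowLen_apply π id rfl hK

lemma card_filter_rowLen (p : ℕ → Prop) [DecidablePred p] (hp : ¬ p 0) {K : ℕ}
    (hK : Multiset.card π.parts ≤ K) :
    #{a ∈ Icc 1 K | p (rowLen π a)} = Multiset.card (π.parts.filter p) := by
  rw [card_filter, sum_Icc_rowLen_apply π (fun x => if p x then 1 else 0) (by simp [hp]) hK,
    Multiset.sum_map_boole]

end Rows

section Columns

variable {n : ℕ} (π : n.Partition)

lemma colLen_eq_card {b K : ℕ} (hb : 1 ≤ b) (hK : Multiset.card π.parts ≤ K) :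
    colLen π b = #{a ∈ Icc 1 K | b ≤ rowLen π a} :=
  (card_filter_rowLen π (b ≤ ·) (by omega) hK).symm

lemma colLen_le_card_parts (b : ℕ) : colLen π b ≤ Multiset.card π.parts :=
  Multiset.card_le_card (Multiset.filter_le _ _)

lemma le_rowLen_iff_le_colLen {a b : ℕ} (ha : 1 ≤ a) (hb : 1 ≤ b) :
    b ≤ rowLen π a ↔ a ≤ colLen π b := by
  rw [colLen_eq_card π hb (le_add_right le_rfl : Multiset.card π.parts ≤ _ + a)]
  constructor
  · intro h
    calc a = #(Icc 1 a) := by simp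
      _ ≤ _ := card_le_card fun x hx => by
        simp only [mem_Icc, mem_filter] at hx ⊢
        exact ⟨⟨hx.1, by omega⟩, h.trans (rowLen_antitone π hx.2)⟩
  · intro h
    by_contra hlt
    have hsub : #{x ∈ Icc 1 (Multiset.card π.parts + a) | b ≤ rowLen π x} ≤ #(Icc 1 (a - 1)) :=
      card_le_card fun x hx => by
        simp only [mem_Icc, mem_filter] at hx ⊢
        refine ⟨hx.1.1, Nat.le_sub_one_of_lt (lt_of_not_ge fun hxa => ?_)⟩
        exact hlt (hx.2.trans (rowLen_antitone π hxa))
    simp only [Nat.card_Icc] at hsub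
    omega

lemma colLen_eq_of_forall {b j : ℕ} (hb : 1 ≤ b)
    (h : ∀ x, 1 ≤ x → (b ≤ rowLen π x ↔ x ≤ j)) : colLen π b = j := by
  have h' : ∀ x, 1 ≤ x → (x ≤ colLen π b ↔ x ≤ j) := fun x hx =>
    (le_rowLen_iff_le_colLen π hx hb).symm.trans (h x hx)
  have h1 := h' (colLen π b)
  have h2 := h' j
  omega

lemma sum_card_filter_Icc_colLen (p : ℕ → Prop) [DecidablePred p] :
    ∑ b ∈ Icc 1 n, #{a ∈ Icc 1 (colLen π b) | p a} = ∑ a ∈ Icc 1 n with p a, rowLen π a := by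
  have hcol : ∀ b ∈ Icc 1 n,
      #{a ∈ Icc 1 (colLen π b) | p a}
        = ∑ a ∈ Icc 1 n with p a, if b ≤ rowLen π a then 1 else 0 := by
    intro b hb
    rw [sum_boole, filter_filter]
    congr 1
    ext a
    have := colLen_le_card_parts π b
    have := card_parts_le π
    simp only [mem_filter, mem_Icc] at hb ⊢
    constructor
    · rintro ⟨⟨ha1, ha⟩, hp⟩
      exact ⟨⟨ha1, by omega⟩, hp, (le_rowLen_iff_le_colLen π ha1 hb.1).2 ha⟩
    · rintro ⟨⟨ha1, -⟩, hp, hba⟩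
      exact ⟨⟨ha1, (le_rowLen_iff_le_colLen π ha1 hb.1).1 hba⟩, hp⟩
  rw [sum_congr rfl hcol, sum_comm]
  refine sum_congr rfl fun a _ => ?_
  rw [sum_boole, Nat.cast_id]
  have := rowLen_le π a
  convert Nat.card_Icc 1 (rowLen π a) using 2
  · ext b
    simp only [mem_filter, mem_Icc]
    omega
  · omega

lemma sum_Icc_colLen : ∑ b ∈ Icc 1 n, colLen π b = n := by
  have := sum_card_filter_Icc_colLen π (fun _ => True)
  simp only [filter_true, Nat.card_Icc, add_tsub_cancel_right] at this
  exact this.trans (sum_Icc_rowLen π (card_parts_le π))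

end Columns

lemma card_filter_odd_add (a m : ℕ) :
    #{b ∈ Icc 1 m | Odd (a + b)} = if Even a then (m + 1) / 2 else m / 2 := by
  induction m with
  | zero => simp
  | succ m ih =>
    rw [card_filter] at ih ⊢
    rw [sum_Icc_succ_top (by omega), ih]
    simp only [Nat.odd_iff, Nat.even_iff]
    split_ifs <;> omega

lemma card_filter_even (m : ℕ) : #{a ∈ Icc 1 m | Even a} = m / 2 := by
  have h := card_filter_odd_add 1 m
  rw [if_neg Nat.not_even_one] at h
  rw [← h]
  congr 1
  ext a
  simp [parity_simps]

lemma cast_card_filter_odd (s : Finset ℕ) (f : ℕ → ℕ) :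
    (#{x ∈ s | Odd (f x)} : ℤ) = ∑ x ∈ s, (f x : ℤ) % 2 := by
  rw [card_filter]
  push_cast
  refine sum_congr rfl fun x _ => ?_
  split_ifs with h <;> [rw [Nat.odd_iff] at h; rw [Nat.not_odd_iff] at h] <;> omega

/-- The number of cells `(a, b)` of odd content `b - a`. -/
def oddContentCells {n : ℕ} (π : n.Partition) : ℕ :=
  ∑ a ∈ Icc 1 n, #{b ∈ Icc 1 (rowLen π a) | Odd (a + b)}

section Srank

variable {n : ℕ} (π : n.Partition)

lemma sum_Icc_colLen_div_two :
    ∑ b ∈ Icc 1 n, colLen π b / 2 = ∑ a ∈ Icc 1 n with Even a, rowLen π a := by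
  simpa only [card_filter_even] using sum_card_filter_Icc_colLen π Even

lemma srank_modEq_two_mul_oddContentCells : srank π ≡ 2 * oddContentCells π [ZMOD 4] := by
  have hrows : ∑ a ∈ Icc 1 n, (rowLen π a : ℤ) = n := by
    exact_mod_cast sum_Icc_rowLen π (card_parts_le π)
  have hcols : ∑ b ∈ Icc 1 n, (colLen π b : ℤ) = n := by exact_mod_cast sum_Icc_colLen π
  have hhalf : ∑ b ∈ Icc 1 n, (colLen π b : ℤ) / 2
      = ∑ a ∈ Icc 1 n, if Even a then (rowLen π a : ℤ) else 0 := by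
    rw [← sum_filter]
    exact_mod_cast sum_Icc_colLen_div_two π
  have hodd : (numOdd π : ℤ) = ∑ a ∈ Icc 1 n, (rowLen π a : ℤ) % 2 := by
    rw [numOdd, ← card_filter_rowLen π Odd (by simp) (card_parts_le π), cast_card_filter_odd]
  have hconj : (numOddConj π : ℤ)
      = n - 2 * ∑ a ∈ Icc 1 n, if Even a then (rowLen π a : ℤ) else 0 := by
    rw [numOddConj, cast_card_filter_odd, ← hcols, ← hhalf, mul_sum, ← sum_sub_distrib]
    exact sum_congr rfl fun b _ => by omega
  have hcells : (oddContentCells π : ℤ)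
      = ∑ a ∈ Icc 1 n, if Even a then ((rowLen π a : ℤ) + 1) / 2 else (rowLen π a : ℤ) / 2 := by
    rw [oddContentCells]
    push_cast
    refine sum_congr rfl fun a _ => ?_
    rw [card_filter_odd_add]
    split_ifs <;> push_cast <;> omega
  have hsplit : srank π - 2 * oddContentCells π = ∑ a ∈ Icc 1 n,
      ((rowLen π a : ℤ) % 2 - rowLen π a + 2 * (if Even a then (rowLen π a : ℤ) else 0)
        - 2 * (if Even a then ((rowLen π a : ℤ) + 1) / 2 else (rowLen π a : ℤ) / 2)) := by
    rw [srank, hodd, hconj, hcells, ← hrows]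
    simp only [sum_add_distrib, sum_sub_distrib, ← mul_sum]
    ring
  refine (Int.modEq_of_dvd ?_).symm
  rw [hsplit]
  exact dvd_sum fun a _ => by split_ifs <;> omega

end Srank

/-- The number `β_a = λ_a - a`. The set `{β_a : a ≥ 1}` is the β-set (Maya diagram) of `π`: a cell
of row `a` with hook length `h` corresponds to a gap `β_a - h` of this set, so the `t`-cores are the
partitions whose β-set is stable under `c ↦ c - t`. -/
def beta {n : ℕ} (π : n.Partition) (a : ℕ) : ℤ := rowLen π a - a

section Beta

variable {n : ℕ} (π : n.Partition)

lemma beta_strictAnti : StrictAnti (beta π) :=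
  strictAnti_nat_of_succ_lt fun a => by
    have := rowLen_antitone π (Nat.le_add_right a 1)
    simp only [beta]
    omega

lemma beta_eq_neg {a : ℕ} (ha : Multiset.card π.parts < a) : beta π a = -a := by
  simp [beta, rowLen_eq_zero π ha]

lemma neg_le_beta (a : ℕ) : -(a : ℤ) ≤ beta π a := by
  simp only [beta]
  omega

lemma exists_hookLen_eq {a : ℕ} (ha : 1 ≤ a) {c : ℤ} (hc : c < beta π a)
    (hgap : ∀ x, 1 ≤ x → beta π x ≠ c) :
    ∃ b, 1 ≤ b ∧ b ≤ rowLen π a ∧ (hookLen π a b : ℤ) = beta π a - c := by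
  have hex : ∃ j, beta π (j + 1) ≤ c := by
    refine ⟨(rowLen π 0 - c).toNat, ?_⟩
    have := rowLen_antitone π (Nat.zero_le ((rowLen π 0 - c).toNat + 1))
    simp only [beta]
    omega
  -- `j` is the number of β-numbers above `c`, and `c + j + 1` is the column of the hook.
  set j := Nat.find hex
  have hj : beta π (j + 1) < c := lt_of_le_of_ne (Nat.find_spec hex) (hgap _ (by omega))
  have haj : a ≤ j := by
    by_contra h
    have := (beta_strictAnti π).antitone (show j + 1 ≤ a by omega)
    omega
  have hcj : c < beta π j := by
    have := Nat.find_min hex (show j - 1 < j by omega)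
    rw [Nat.sub_add_cancel (by omega)] at this
    exact lt_of_not_ge this
  have hb0 := neg_le_beta π (j + 1)
  set b := (c + j + 1).toNat
  have hb : (b : ℤ) = c + j + 1 := Int.toNat_of_nonneg (by push_cast at hb0; omega)
  have hcol : ∀ x, 1 ≤ x → (b ≤ rowLen π x ↔ x ≤ j) := by
    intro x hx
    constructor
    · intro hbx
      by_contra hxj
      have := rowLen_antitone π (show j + 1 ≤ x by omega)
      simp only [beta] at hj
      omega
    · intro hxj
      have := rowLen_antitone π hxj
      simp only [beta] at hcj
      omega
  have hba := (hcol a ha).2 haj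
  refine ⟨b, by omega, hba, ?_⟩
  rw [hookLen, colLen_eq_of_forall π (by omega) hcol, beta]
  omega

lemma IsCore.exists_beta_eq_sub {t : ℕ} (ht : 0 < t) (hc : IsCore t π) {a : ℕ} (ha : 1 ≤ a) :
    ∃ x, 1 ≤ x ∧ beta π x = beta π a - t := by
  by_contra! h
  obtain ⟨b, hb1, hb, hhook⟩ := exists_hookLen_eq π ha (c := beta π a - t) (by omega) h
  exact hc a b ha hb1 hb (by omega)

lemma IsCore.exists_beta_eq_sub_mul {t : ℕ} (ht : 0 < t) (hc : IsCore t π) {a : ℕ} (ha : 1 ≤ a)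
    (k : ℕ) : ∃ x, 1 ≤ x ∧ beta π x = beta π a - t * k := by
  induction k with
  | zero => exact ⟨a, ha, by simp⟩
  | succ k ih =>
    obtain ⟨x, hx, hbx⟩ := ih
    obtain ⟨y, hy, hby⟩ := IsCore.exists_beta_eq_sub π ht hc hx
    exact ⟨y, hy, by rw [hby, hbx]; push_cast; ring⟩

end Beta

lemma exists_eq_sub_add_mul_of_emod_eq {t r A : ℕ} (hr : r < t) {c : ℤ} (hcr : c % t = r)
    (hc : -((t : ℤ) * A) ≤ c) : ∃ i : ℕ, c = r - t * A + t * i := by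
  have hdiv := Int.mul_ediv_add_emod c t
  rw [hcr] at hdiv
  have hqA : 0 ≤ c / t + A := by
    by_contra! h
    have : (t : ℤ) * (c / t + A) ≤ t * (-1) := mul_le_mul_of_nonneg_left (by omega) (by positivity)
    have : (r : ℤ) < t := by exact_mod_cast hr
    linarith
  exact ⟨(c / t + A).toNat, by rw [Int.toNat_of_nonneg hqA]; linarith⟩

/-- The beads of a James abacus with `K` beads (shifted by `-K`). -/
def betaSet {n : ℕ} (π : n.Partition) (K : ℕ) : Finset ℤ := (Icc 1 K).image (beta π)

section Abacus

variable {n : ℕ} (π : n.Partition)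

lemma sum_betaSet {M : Type*} [AddCommMonoid M] (K : ℕ) (f : ℤ → M) :
    ∑ c ∈ betaSet π K, f c = ∑ a ∈ Icc 1 K, f (beta π a) :=
  sum_image fun _ _ _ _ h => (beta_strictAnti π).injective h

lemma mem_betaSet_iff {K : ℕ} (hK : Multiset.card π.parts ≤ K) {c : ℤ} :
    c ∈ betaSet π K ↔ -(K : ℤ) ≤ c ∧ ∃ x, 1 ≤ x ∧ beta π x = c := by
  simp only [betaSet, mem_image, mem_Icc]
  constructor
  · rintro ⟨x, ⟨hx1, hxK⟩, rfl⟩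
    exact ⟨by have := neg_le_beta π x; omega, x, hx1, rfl⟩
  · rintro ⟨hc, x, hx1, rfl⟩
    refine ⟨x, ⟨hx1, ?_⟩, rfl⟩
    by_contra hxK
    rw [beta_eq_neg π (by omega)] at hc
    omega

lemma IsCore.sub_mul_mem_betaSet {t K : ℕ} (ht : 0 < t) (hc : IsCore t π)
    (hK : Multiset.card π.parts ≤ K) {c : ℤ} (hcS : c ∈ betaSet π K) (k : ℕ)
    (hk : -(K : ℤ) ≤ c - t * k) : c - t * k ∈ betaSet π K := by
  obtain ⟨-, x, hx, rfl⟩ := (mem_betaSet_iff π hK).1 hcS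
  obtain ⟨y, hy, hby⟩ := IsCore.exists_beta_eq_sub_mul π ht hc hx k
  exact (mem_betaSet_iff π hK).2 ⟨hk, y, hy, hby⟩

lemma IsCore.filter_betaSet_eq_image {t A : ℕ} (ht : 0 < t) (hc : IsCore t π)
    (hA : Multiset.card π.parts < A) {r : ℕ} (hr : r < t) :
    ∃ N, (betaSet π (t * A)).filter (fun c : ℤ => c % t = r)
      = (range N).image (fun i : ℕ => (r : ℤ) - t * A + t * i) := by
  set g := fun i : ℕ => (r : ℤ) - t * A + t * i with hg
  have hg_inj : Function.Injective g := fun i j h => by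
    have : (t : ℤ) * i = t * j := by simp only [hg] at h; linarith
    exact_mod_cast mul_left_cancel₀ (by positivity) this
  have hg_ge : ∀ i, -((t * A : ℕ) : ℤ) ≤ g i := fun i => by
    simp only [hg]
    push_cast
    nlinarith
  have hK : Multiset.card π.parts ≤ t * A := hA.le.trans (Nat.le_mul_of_pos_left A ht)
  have hex : ∃ i, g i ∉ betaSet π (t * A) := by
    obtain ⟨_, ⟨i, rfl⟩, hi⟩ :=
      (Set.infinite_range_of_injective hg_inj).exists_notMem_finset (betaSet π (t * A))
    exact ⟨i, hi⟩
  refine ⟨Nat.find hex, ?_⟩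
  ext c
  simp only [mem_filter, mem_image, mem_range]
  constructor
  · rintro ⟨hcS, hcr⟩
    have hcK := ((mem_betaSet_iff π hK).1 hcS).1
    push_cast at hcK
    obtain ⟨i, rfl⟩ := exists_eq_sub_add_mul_of_emod_eq hr hcr hcK
    refine ⟨i, lt_of_not_ge fun hN => Nat.find_spec hex ?_, rfl⟩
    have hgN : g (Nat.find hex) = g i - t * (i - Nat.find hex : ℕ) := by
      simp only [hg]
      push_cast [hN]
      ring
    have hge := hg_ge (Nat.find hex)
    rw [hgN] at hge ⊢
    exact IsCore.sub_mul_mem_betaSet π ht hc hK hcS _ hge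
  · rintro ⟨i, hi, rfl⟩
    refine ⟨not_not.1 (Nat.find_min hex hi), ?_⟩
    simp only [hg]
    rw [show (r : ℤ) - t * A + t * i = r + t * (i - A) by ring, Int.add_mul_emod_self_left,
      Int.emod_eq_of_lt (by positivity) (by exact_mod_cast hr)]

lemma IsCore.exists_sum_beta_eq_sum_runners {t A : ℕ} (ht : 0 < t) (hc : IsCore t π)
    (hA : Multiset.card π.parts < A) :
    ∃ N : ℕ → ℕ, ∀ f : ℤ → ℤ, ∑ a ∈ Icc 1 (t * A), f (beta π a)
      = ∑ r ∈ range t, ∑ i ∈ range (N r), f ((r : ℤ) - t * A + t * i) := by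
  have hrun : ∀ r, ∃ N, r < t → (betaSet π (t * A)).filter (fun c : ℤ => c % t = r)
      = (range N).image (fun i : ℕ => (r : ℤ) - t * A + t * i) := fun r => by
    by_cases hr : r < t
    · obtain ⟨N, hN⟩ := IsCore.filter_betaSet_eq_image π ht hc hA hr
      exact ⟨N, fun _ => hN⟩
    · exact ⟨0, fun h => absurd h hr⟩
  choose N hN using hrun
  refine ⟨N, fun f => ?_⟩
  have hmaps : ∀ c ∈ betaSet π (t * A), (c % t).toNat ∈ range t := fun c _ => by
    have := Int.emod_lt_of_pos c (by positivity : (0 : ℤ) < t)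
    rw [mem_range]
    omega
  rw [← sum_betaSet, ← sum_fiberwise_of_maps_to hmaps]
  refine sum_congr rfl fun r hr => ?_
  have hnonneg : ∀ c : ℤ, 0 ≤ c % t := fun c => Int.emod_nonneg c (by positivity)
  have hfilter : (betaSet π (t * A)).filter (fun c : ℤ => (c % t).toNat = r)
      = (betaSet π (t * A)).filter (fun c : ℤ => c % t = r) :=
    filter_congr fun c _ => by have := hnonneg c; omega
  rw [hfilter, hN r (mem_range.1 hr), sum_image fun i _ j _ h => ?_]
  have : (t : ℤ) * i = t * j := by linarith
  exact_mod_cast mul_left_cancel₀ (by positivity) this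

end Abacus

lemma two_mul_sum_range_cast (N : ℕ) : 2 * ∑ i ∈ range N, (i : ℤ) = N * (N - 1) := by
  induction N with
  | zero => simp
  | succ N ih => rw [sum_range_succ, mul_add, ih]; push_cast; ring

lemma two_mul_sum_Icc_cast (K : ℕ) : 2 * ∑ a ∈ Icc 1 K, (a : ℤ) = K * (K + 1) := by
  induction K with
  | zero => simp
  | succ K ih => rw [sum_Icc_succ_top (by omega), mul_add, ih]; push_cast; ring

lemma sum_Icc_emod_two (K : ℕ) : ∑ a ∈ Icc 1 K, (a : ℤ) % 2 = (K + 1) / 2 := by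
  induction K with
  | zero => simp
  | succ K ih => rw [sum_Icc_succ_top (by omega), ih]; push_cast; omega

lemma sum_range_add_emod_two (s : ℤ) (N : ℕ) :
    ∑ i ∈ range N, (s + i) % 2 = (s + N) / 2 - s / 2 := by
  induction N with
  | zero => simp
  | succ N ih => rw [sum_range_succ, ih]; push_cast; omega

/-- With `c r = N r - A` the charge of runner `r`, this is the Garvan–Kim–Stanton formula
`2n = t ∑ c_r² + 2 ∑ r c_r` for the size of a `t`-core. -/
lemma two_mul_sum_runners (t A : ℕ) (N : ℕ → ℕ) (hN : ∑ r ∈ range t, N r = t * A) :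
    2 * ∑ r ∈ range t, ∑ i ∈ range (N r), ((r : ℤ) - t * A + t * i) + t * A * (t * A + 1)
      = t * ∑ r ∈ range t, ((N r : ℤ) - A) ^ 2 + 2 * ∑ r ∈ range t, (r : ℤ) * ((N r : ℤ) - A) := by
  have hinner : ∀ r, 2 * ∑ i ∈ range (N r), ((r : ℤ) - t * A + t * i)
      = t * ((N r : ℤ) - A) ^ 2 + 2 * r * ((N r : ℤ) - A) - t * ((N r : ℤ) - A)
        + 2 * r * A - t * A ^ 2 - t * A := fun r => by
    rw [sum_add_distrib, sum_const, card_range, ← mul_sum, mul_add, mul_left_comm,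
      two_mul_sum_range_cast, nsmul_eq_mul]
    ring
  have hN' : ∑ r ∈ range t, (N r : ℤ) = t * A := by exact_mod_cast hN
  have h2 : ∑ r ∈ range t, 2 * (r : ℤ) * ((N r : ℤ) - A)
      = 2 * ∑ r ∈ range t, (r : ℤ) * ((N r : ℤ) - A) := by
    rw [mul_sum]
    simp only [mul_assoc]
  rw [mul_sum, sum_congr rfl fun r _ => hinner r]
  simp only [sum_add_distrib, sum_sub_distrib, ← mul_sum, ← sum_mul, sum_const, card_range,
    nsmul_eq_mul]
  rw [hN', h2, two_mul_sum_range_cast]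
  ring

section FiveCores

variable {n : ℕ} (π : n.Partition)

lemma two_mul_sum_beta {K : ℕ} (hK : Multiset.card π.parts ≤ K) :
    2 * ∑ a ∈ Icc 1 K, beta π a + K * (K + 1) = 2 * n := by
  have hrows : ∑ a ∈ Icc 1 K, (rowLen π a : ℤ) = n := by exact_mod_cast sum_Icc_rowLen π hK
  simp only [beta, sum_sub_distrib, mul_sub, hrows, two_mul_sum_Icc_cast]
  ring

lemma four_mul_oddContentCells {K : ℕ} (hK : n ≤ K) (hK2 : Even K) :
    4 * (oddContentCells π : ℤ) = 2 * n - K + 2 * ∑ a ∈ Icc 1 K, beta π a % 2 := by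
  have hext : oddContentCells π = ∑ a ∈ Icc 1 K, #{b ∈ Icc 1 (rowLen π a) | Odd (a + b)} :=
    sum_subset (Icc_subset_Icc_right hK) fun a ha hna => by
      have := card_parts_le π
      simp only [mem_Icc] at ha hna
      rw [rowLen_eq_zero π (by omega)]
      rfl
  have hrow : ∀ a, 2 * (#{b ∈ Icc 1 (rowLen π a) | Odd (a + b)} : ℤ)
      = rowLen π a + beta π a % 2 - a % 2 := fun a => by
    rw [card_filter_odd_add, beta]
    split_ifs with h <;> [rw [Nat.even_iff] at h; rw [Nat.not_even_iff] at h] <;> push_cast <;>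
      omega
  have hrows : ∑ a ∈ Icc 1 K, (rowLen π a : ℤ) = n :=
    by exact_mod_cast sum_Icc_rowLen π ((card_parts_le π).trans hK)
  have hcells : 2 * (oddContentCells π : ℤ)
      = n + ∑ a ∈ Icc 1 K, beta π a % 2 - (K + 1) / 2 := by
    rw [hext, Nat.cast_sum, mul_sum, sum_congr rfl fun a _ => hrow a, sum_sub_distrib,
      sum_add_distrib, hrows, sum_Icc_emod_two]
  obtain ⟨k, rfl⟩ := hK2
  push_cast at hcells ⊢
  omega

lemma IsCore.exists_five_charges (hc : IsCore 5 π) :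
    ∃ c : ℕ → ℤ, ∑ r ∈ range 5, c r = 0 ∧
      2 * (n : ℤ) = 5 * ∑ r ∈ range 5, c r ^ 2 + 2 * ∑ r ∈ range 5, (r : ℤ) * c r ∧
      4 * (oddContentCells π : ℤ) = 2 * n + 2 - ∑ r ∈ range 5, ((r : ℤ) + c r) % 2 := by
  have hparts := card_parts_le π
  obtain ⟨N, hN⟩ :=
    IsCore.exists_sum_beta_eq_sum_runners π (A := 2 * (n + 1)) (by norm_num) hc (by omega)
  have hcount : ∑ r ∈ range 5, N r = 5 * (2 * (n + 1)) := by
    have := hN fun _ => 1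
    simp only [sum_const, card_range, Nat.card_Icc, nsmul_eq_mul, mul_one] at this
    exact_mod_cast this.symm
  refine ⟨fun r => N r - (2 * (n + 1) : ℕ), ?_, ?_, ?_⟩
  · have h : ∑ r ∈ range 5, (N r : ℤ) = (5 * (2 * (n + 1)) : ℕ) := by exact_mod_cast hcount
    rw [sum_sub_distrib, h, sum_const, card_range, nsmul_eq_mul]
    push_cast
    ring
  · have h1 := two_mul_sum_runners 5 (2 * (n + 1)) N hcount
    have h2 := two_mul_sum_beta π (K := 5 * (2 * (n + 1))) (by omega)
    have h3 := hN fun c => c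
    rw [h3] at h2
    push_cast at h1 h2 ⊢
    linarith
  · rw [four_mul_oddContentCells π (K := 5 * (2 * (n + 1))) (by omega) ⟨5 * (n + 1), by ring⟩,
      hN (· % 2)]
    have hpar : ∀ (r i : ℕ), ((r : ℤ) - (5 : ℕ) * ((2 * (n + 1) : ℕ) : ℤ) + (5 : ℕ) * i) % 2
        = ((r : ℤ) + i) % 2 := fun r i => by push_cast; omega
    simp only [hpar, sum_range_add_emod_two]
    simp only [sum_range_succ, sum_range_zero] at hcount ⊢
    push_cast
    omega

end FiveCores

lemma exists_sq_eq_eight_mul_add (c : ℤ) :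
    ∃ q, c % 2 = 0 ∧ c ^ 2 = 8 * q + 2 * c ∨ c % 2 = 1 ∧ c ^ 2 = 8 * q + 1 := by
  obtain ⟨k, rfl | rfl⟩ : ∃ k, c = 2 * k ∨ c = 2 * k + 1 := ⟨c / 2, by omega⟩
  · obtain ⟨j, rfl | rfl⟩ : ∃ j, k = 2 * j ∨ k = 2 * j + 1 := ⟨k / 2, by omega⟩
    · exact ⟨2 * j ^ 2 - j, Or.inl ⟨by omega, by ring⟩⟩
    · exact ⟨2 * j ^ 2 + j, Or.inl ⟨by omega, by ring⟩⟩
  · obtain ⟨j, hj⟩ := Int.two_dvd_mul_add_one k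
    exact ⟨j, Or.inr ⟨by omega, by linear_combination 4 * hj⟩⟩

set_option maxHeartbeats 1000000 in
lemma eight_dvd_of_charges (c : ℕ → ℤ) (m : ℤ) (hc : ∑ r ∈ range 5, c r = 0)
    (hm : 2 * m = 5 * ∑ r ∈ range 5, c r ^ 2 + 2 * ∑ r ∈ range 5, (r : ℤ) * c r)
    (hm4 : m % 4 = 0 ∨ m % 4 = 1) :
    8 ∣ 2 * m + 2 - ∑ r ∈ range 5, ((r : ℤ) + c r) % 2 := by
  simp only [sum_range_succ, sum_range_zero, Nat.cast_zero, Nat.cast_one, Nat.cast_ofNat,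
    zero_add, zero_mul, one_mul] at hc hm ⊢
  have p1 : (1 + c 1) % 2 = 1 - c 1 % 2 := by omega
  have p3 : (3 + c 3) % 2 = 1 - c 3 % 2 := by omega
  have p2 : (2 + c 2) % 2 = c 2 % 2 := by omega
  have p4 : (4 + c 4) % 2 = c 4 % 2 := by omega
  rw [p1, p2, p3, p4]
  obtain ⟨q0, h0⟩ := exists_sq_eq_eight_mul_add (c 0)
  obtain ⟨q1, h1⟩ := exists_sq_eq_eight_mul_add (c 1)
  obtain ⟨q2, h2⟩ := exists_sq_eq_eight_mul_add (c 2)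
  obtain ⟨q3, h3⟩ := exists_sq_eq_eight_mul_add (c 3)
  obtain ⟨q4, h4⟩ := exists_sq_eq_eight_mul_add (c 4)
  rcases h0 with ⟨e0, s0⟩ | ⟨e0, s0⟩ <;> rcases h1 with ⟨e1, s1⟩ | ⟨e1, s1⟩ <;>
    rcases h2 with ⟨e2, s2⟩ | ⟨e2, s2⟩ <;> rcases h3 with ⟨e3, s3⟩ | ⟨e3, s3⟩ <;>
    rcases h4 with ⟨e4, s4⟩ | ⟨e4, s4⟩ <;> rw [s0, s1, s2, s3, s4] at hm <;>
    rw [e0, e1, e2, e3, e4] <;> omega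

theorem srank_emod_four_eq_zero {n : ℕ} (π : n.Partition) (hc : IsCore 5 π)
    (hn : n % 4 = 0 ∨ n % 4 = 1) : srank π % 4 = 0 := by
  obtain ⟨c, hsum, hsize, hcells⟩ := IsCore.exists_five_charges π hc
  have h8 := eight_dvd_of_charges c n hsum hsize (by omega)
  rw [← hcells] at h8
  have := srank_modEq_two_mul_oddContentCells π
  rw [Int.ModEq] at this
  omega

lemma a5srank_zero_eq_coreCount {N : ℕ} (hN : N % 4 = 0 ∨ N % 4 = 1) :
    a5srank 0 N = coreCount 5 N := by
  rw [a5srank, coreCount]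
  exact congrArg card (filter_congr fun π _ => and_iff_left_of_imp fun hc =>
    srank_emod_four_eq_zero π hc hN)

/-- `a_{5,0}(4n) = a₅(4n)` and `a_{5,0}(4n+1) = a₅(4n+1)`. -/
theorem fivecore_srank_zero_mod_four (n : ℕ) :
    a5srank 0 (4 * n) = coreCount 5 (4 * n) ∧
      a5srank 0 (4 * n + 1) = coreCount 5 (4 * n + 1) :=
  ⟨a5srank_zero_eq_coreCount (by omega), a5srank_zero_eq_coreCount (by omega)⟩

end AndrewsStanley
end
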